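/- Let γ be a self-adjoint operator with γ² = I that anticommutes with a set S of operators, and suppose the unital *-algebra generated by S equals L(H_E) ⊕ L(H_O) for an orthogonal decomposition H = H_E ⊕ H_O (block-diagonal algebra) with γ mapping H_E to H_O and vice versa. Then the *-algebra generated by S ∪ {γ} is all of L(H). -/

import Mathlib

open Set

namespace Submodule

variable {𝕜 H : Type*} [RCLike 𝕜] [NormedAddCommGroup H] [InnerProductSpace 𝕜 H]
  (E : Submodule 𝕜 H) [E.HasOrthogonalProjection]

noncomputable def diagPart (T : H →L[𝕜] H) : H →L[𝕜] H :=
  E.starProjection * T * E.starProjection + Eᗮ.starProjection * T * Eᗮ.starProjection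

noncomputable def offDiagPart (T : H →L[𝕜] H) : H →L[𝕜] H :=
  E.starProjection * T * Eᗮ.starProjection + Eᗮ.starProjection * T * E.starProjection

theorem diagPart_add_offDiagPart (T : H →L[𝕜] H) : E.diagPart T + E.offDiagPart T = T := by
  have hPQ : E.starProjection + Eᗮ.starProjection = 1 := by
    rw [starProjection_orthogonal', add_sub_cancel]
  calc E.diagPart T + E.offDiagPart T
      = (E.starProjection + Eᗮ.starProjection) * T * (E.starProjection + Eᗮ.starProjection) := by
        simp only [diagPart, offDiagPart]
        noncomm_ring
    _ = T := by rw [hPQ, one_mul, mul_one]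

theorem mapsTo_diagPart (T : H →L[𝕜] H) :
    MapsTo (E.diagPart T) E E ∧ MapsTo (E.diagPart T) Eᗮ Eᗮ := by
  constructor
  · intro x hx
    simp only [diagPart, add_apply, mul_apply_eq_comp,
      starProjection_orthogonal_apply_eq_zero hx, map_zero, add_zero]
    exact E.starProjection_apply_mem _
  · intro x hx
    simp only [diagPart, add_apply, mul_apply_eq_comp,
      (E.starProjection_apply_eq_zero_iff).mpr hx, map_zero, zero_add]
    exact Eᗮ.starProjection_apply_mem _

theorem mapsTo_offDiagPart (T : H →L[𝕜] H) :
    MapsTo (E.offDiagPart T) E Eᗮ ∧ MapsTo (E.offDiagPart T) Eᗮ E := by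
  constructor
  · intro x hx
    simp only [offDiagPart, add_apply, mul_apply_eq_comp,
      starProjection_orthogonal_apply_eq_zero hx, map_zero, zero_add]
    exact Eᗮ.starProjection_apply_mem _
  · intro x hx
    simp only [offDiagPart, add_apply, mul_apply_eq_comp,
      (E.starProjection_apply_eq_zero_iff).mpr hx, map_zero, add_zero]
    exact E.starProjection_apply_mem _

/-- The off-diagonal part of any operator, multiplied by the involution `γ`, becomes block
diagonal. -/
theorem eq_top_of_blockDiagonal_mem_of_swap_mem {A : Subalgebra 𝕜 (H →L[𝕜] H)}
    (hA : ∀ T : H →L[𝕜] H, MapsTo T E E → MapsTo T Eᗮ Eᗮ → T ∈ A)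
    {γ : H →L[𝕜] H} (hγA : γ ∈ A) (hγsq : γ * γ = 1)
    (hγE : MapsTo γ E Eᗮ) (hγO : MapsTo γ Eᗮ E) : A = ⊤ := by
  refine eq_top_iff.2 fun T _ => ?_
  obtain ⟨hdiagE, hdiagO⟩ := E.mapsTo_diagPart T
  obtain ⟨hoffE, hoffO⟩ := E.mapsTo_offDiagPart T
  have hoffγ : E.offDiagPart T * γ ∈ A := hA _ (hoffO.comp hγE) (hoffE.comp hγO)
  have hoff : E.offDiagPart T = E.offDiagPart T * γ * γ := by rw [mul_assoc, hγsq, mul_one]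
  rw [← E.diagPart_add_offDiagPart T, hoff]
  exact add_mem (hA _ hdiagE hdiagO) (mul_mem hoffγ hγA)

end Submodule

theorem majorana_generates_full_algebra_general
    {H : Type*} [NormedAddCommGroup H] [InnerProductSpace ℂ H] [FiniteDimensional ℂ H]
    (E : Submodule ℂ H) (S : Set (H →L[ℂ] H)) (γ : H →L[ℂ] H)
    (hγsq : γ * γ = 1)
    (hγE : ∀ x ∈ E, γ x ∈ Eᗮ) (hγO : ∀ x ∈ Eᗮ, γ x ∈ E)
    (hS : (StarAlgebra.adjoin ℂ S : Set (H →L[ℂ] H)) =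
      {T : H →L[ℂ] H | (∀ x ∈ E, T x ∈ E) ∧ (∀ x ∈ Eᗮ, T x ∈ Eᗮ)}) :
    StarAlgebra.adjoin ℂ (S ∪ {γ}) = ⊤ := by
  have hblock : ∀ T : H →L[ℂ] H, MapsTo T E E → MapsTo T Eᗮ Eᗮ →
      T ∈ (StarAlgebra.adjoin ℂ (S ∪ {γ})).toSubalgebra := by
    intro T hTE hTO
    have hT : T ∈ StarAlgebra.adjoin ℂ S := by
      rw [← SetLike.mem_coe, hS]
      exact ⟨hTE, hTO⟩
    exact StarAlgebra.adjoin_mono subset_union_left hT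
  rw [← StarSubalgebra.toSubalgebra_eq_top]
  exact E.eq_top_of_blockDiagonal_mem_of_swap_mem hblock
    (StarAlgebra.subset_adjoin ℂ _ (Or.inr rfl)) hγsq hγE hγO

/-- Adding one Majorana to the even algebra generates the full operator algebra:
let `H` be a finite-dimensional complex Hilbert space with orthogonal decomposition
`H = H_E ⊕ H_O` (with `H_O = H_Eᗮ`), let `γ` be a self-adjoint operator with `γ² = I`
exchanging `H_E` and `H_O`, anticommuting with every element of a set `S` of operators,
and suppose the unital *-algebra generated by `S` is exactly the block-diagonal algebra
`L(H_E) ⊕ L(H_O)` of operators preserving both summands. Then the *-algebra generated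
by `S ∪ {γ}` is all of `L(H)`. -/
theorem majorana_generates_full_algebra
    {H : Type*} [NormedAddCommGroup H] [InnerProductSpace ℂ H] [FiniteDimensional ℂ H]
    (E : Submodule ℂ H) (S : Set (H →L[ℂ] H)) (γ : H →L[ℂ] H)
    (hγsa : star γ = γ) (hγsq : γ * γ = 1)
    (hγE : ∀ x ∈ E, γ x ∈ Eᗮ) (hγO : ∀ x ∈ Eᗮ, γ x ∈ E)
    (hanti : ∀ T ∈ S, γ * T = -(T * γ))
    (hS : (StarAlgebra.adjoin ℂ S : Set (H →L[ℂ] H)) =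
      {T : H →L[ℂ] H | (∀ x ∈ E, T x ∈ E) ∧ (∀ x ∈ Eᗮ, T x ∈ Eᗮ)}) :
    StarAlgebra.adjoin ℂ (S ∪ {γ}) = ⊤ :=
  majorana_generates_full_algebra_general E S γ hγsq hγE hγO hS
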